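/- Let p be a prime, let Λ₁ and Λ₂ be rings whose underlying additive groups are free ℤ-modules of finite rank, and suppose there is an isomorphism of ℤ_p-algebras ℤ_p ⊗_ℤ Λ₂ ≅ S₁ × ⋯ × S_g for ℤ_p-algebras S₁, …, S_g. Then for every natural number m, the number of left ideals of ℤ_p ⊗_ℤ (Λ₁ ⊗_ℤ Λ₂) of index p^m equals Σ ∏_{k=1}^{g} a_{p^{m_k}}(S_k ⊗_{ℤ_p} (ℤ_p ⊗_ℤ Λ₁)), where the sum runs over all g-tuples (m₁, …, m_g) of natural numbers with m₁ + ⋯ + m_g = m, and a_N(Λ) denotes the number of left ideals of a ring Λ of index N. -/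

import Mathlib

/-!
After base change to `ℤ_[p]` the ring splits as a finite product:
`ℤ_p ⊗ (Λ₁ ⊗ Λ₂) ≅ (ℤ_p ⊗ Λ₂) ⊗ Λ₁ ≅ (∏ S_k) ⊗ Λ₁ ≅ ∏ S_k ⊗_{ℤ_p} (ℤ_p ⊗ Λ₁)`.
Left ideals of a finite product are tuples of left ideals, the index being the product of the
indices, and `p ^ m` factors as a product of naturals only as `∏ p ^ m_k` with `∑ m_k = m`.
Adding up the counts needs them finite: an ideal of index `p ^ m` contains `p ^ m Λ`, and
`Λ ⧸ p ^ m Λ` is finite because `Λ` is finite over `ℤ_[p]`.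
-/

open scoped TensorProduct

/-- `a_N(Λ)`: the number of left ideals `I` of the ring `Λ` such that the
quotient `Λ/I` has exactly `N` elements. -/
noncomputable def leftIdealCount (Λ : Type*) [Ring Λ] (N : ℕ) : ℕ :=
  Nat.card {I : Ideal Λ // Nat.card (Λ ⧸ I) = N}

theorem Nat.prod_eq_prime_pow_iff {p : ℕ} (hp : p.Prime) {g m : ℕ} {a : Fin g → ℕ} :
    ∏ k, a k = p ^ m ↔ ∃ μ ∈ Finset.Nat.antidiagonalTuple g m, ∀ k, a k = p ^ μ k := by
  constructor
  · intro h
    have hdvd (k : Fin g) : a k ∣ p ^ m := h ▸ Finset.dvd_prod_of_mem a (Finset.mem_univ k)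
    choose μ _ hμ using fun k => (Nat.dvd_prime_pow hp).mp (hdvd k)
    refine ⟨μ, Finset.Nat.mem_antidiagonalTuple.mpr (Nat.pow_right_injective hp.two_le ?_), hμ⟩
    simp only [← h, hμ, Finset.prod_pow_eq_pow_sum]
  · rintro ⟨μ, hμ, ha⟩
    simp only [ha, Finset.prod_pow_eq_pow_sum, Finset.Nat.mem_antidiagonalTuple.mp hμ]

theorem Nat.card_prod_eq_prime_pow {p : ℕ} (hp : p.Prime) {g : ℕ} {X : Fin g → Type*}
    (c : ∀ k, X k → ℕ) (m : ℕ) [∀ k n, Finite {x // c k x = p ^ n}] :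
    Nat.card {x : ∀ k, X k // ∏ k, c k (x k) = p ^ m} =
      ∑ μ ∈ Finset.Nat.antidiagonalTuple g m, ∏ k, Nat.card {x // c k x = p ^ μ k} := by
  set T := Finset.Nat.antidiagonalTuple g m
  let F (μ : T) : Set (∀ k, X k) := Set.univ.pi fun k => {x | c k x = p ^ μ.1 k}
  have hunion : {x : ∀ k, X k | ∏ k, c k (x k) = p ^ m} = ⋃ μ, F μ := by
    ext x
    simp [F, Nat.prod_eq_prime_pow_iff hp, T]
  have hdisj : Pairwise (Function.onFun Disjoint F) := by
    intro μ ν hμν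
    refine Set.disjoint_left.mpr fun x hμ hν => hμν (Subtype.ext (funext fun k => ?_))
    exact Nat.pow_right_injective hp.two_le ((hμ k trivial).symm.trans (hν k trivial))
  calc Nat.card {x : ∀ k, X k // ∏ k, c k (x k) = p ^ m}
      = Nat.card (⋃ μ, F μ) := by rw [← hunion]; rfl
    _ = Nat.card (Σ μ, F μ) := Nat.card_congr (Set.unionEqSigmaOfDisjoint hdisj)
    _ = ∑ μ : T, ∏ k, Nat.card {x // c k x = p ^ μ.1 k} := by
      have (μ : T) (k : Fin g) : Finite {x | c k x = p ^ μ.1 k} :=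
        inferInstanceAs (Finite {x // c k x = p ^ μ.1 k})
      have (μ : T) : Finite (F μ) := Finite.of_equiv _ (Equiv.Set.univPi _).symm
      rw [Nat.card_sigma]
      exact Finset.sum_congr rfl fun μ _ => (Nat.card_congr (Equiv.Set.univPi _)).trans Nat.card_pi
    _ = _ := Finset.sum_coe_sort T fun μ => ∏ k, Nat.card {x // c k x = p ^ μ k}

section
variable {Λ Λ' : Type*} [Ring Λ] [Ring Λ']

theorem Ideal.card_quotient_comap_ringEquiv (e : Λ ≃+* Λ') (I : Ideal Λ') :
    Nat.card (Λ ⧸ I.comap e) = Nat.card (Λ' ⧸ I) :=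
  I.toAddSubgroup.index_comap_of_surjective (f := e.toAddMonoidHom) e.surjective

theorem leftIdealCount_congr (e : Λ ≃+* Λ') (N : ℕ) :
    leftIdealCount Λ N = leftIdealCount Λ' N :=
  (Nat.card_congr ((Ideal.relIsoOfBijective e e.bijective).toEquiv.subtypeEquiv fun I => by
    rw [← Ideal.card_quotient_comap_ringEquiv e I]; rfl)).symm

end

theorem Ideal.card_quotient_pi {ι : Type*} [Fintype ι] {R : ι → Type*} [∀ i, Ring (R i)]
    (I : ∀ i, Ideal (R i)) :
    Nat.card ((∀ i, R i) ⧸ Ideal.pi I) = ∏ i, Nat.card (R i ⧸ I i) := by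
  rw [← Nat.card_pi]
  refine Nat.card_congr ((Quotient.congrRight fun x y => ?_).trans (Setoid.piQuotientEquiv _).symm)
  simp [Submodule.quotientRel_def, Setoid.piSetoid_apply, Ideal.mem_pi]

theorem leftIdealCount_pi_prime_pow {p : ℕ} (hp : p.Prime) {g : ℕ} (R : Fin g → Type*)
    [∀ k, Ring (R k)]
    [∀ k n, Finite {I : Ideal (R k) // Nat.card (R k ⧸ I) = p ^ n}] (m : ℕ) :
    leftIdealCount (∀ k, R k) (p ^ m) =
      ∑ μ ∈ Finset.Nat.antidiagonalTuple g m, ∏ k, leftIdealCount (R k) (p ^ μ k) :=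
  calc leftIdealCount (∀ k, R k) (p ^ m)
      = Nat.card {I : ∀ k, Ideal (R k) // ∏ k, Nat.card (R k ⧸ I k) = p ^ m} :=
        (Nat.card_congr (Ideal.piOrderIso.symm.toEquiv.subtypeEquiv fun I => by
          rw [← Ideal.card_quotient_pi]; rfl)).symm
    _ = _ := Nat.card_prod_eq_prime_pow hp (fun k I => Nat.card (R k ⧸ I)) m

theorem Submodule.finite_card_quotient_eq (R M : Type*) [CommRing R] [AddCommGroup M] [Module R M]
    [Module.Finite R M] (n : ℕ) [Finite (R ⧸ Ideal.span {(n : R)})] :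
    Finite {N : Submodule R M // Nat.card (M ⧸ N) = n} := by
  set I := Ideal.span {(n : R)}
  set N₀ : Submodule R M := I • ⊤
  have hle (N : Submodule R M) (hN : Nat.card (M ⧸ N) = n) : N₀ ≤ N := by
    refine Submodule.smul_le.mpr fun r hr x _ => ?_
    obtain ⟨a, rfl⟩ := Ideal.mem_span_singleton'.mp hr
    have hnx : n • x ∈ N := by
      rw [← Submodule.Quotient.mk_eq_zero, Submodule.Quotient.mk_smul, ← hN]
      exact card_nsmul_eq_zero'
    rw [mul_smul, Nat.cast_smul_eq_nsmul]
    exact N.smul_mem a hnx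
  have : Module.Finite (R ⧸ I) (M ⧸ N₀) := Module.Finite.of_restrictScalars_finite R _ _
  have : Finite (M ⧸ N₀) := Module.finite_of_finite (R ⧸ I)
  have : Finite (Submodule R (M ⧸ N₀)) := Finite.of_injective _ SetLike.coe_injective
  refine Finite.of_injective (fun N => N.1.map N₀.mkQ) fun N N' h => Subtype.ext ?_
  simpa only [Submodule.comap_map_mkQ, sup_eq_right.mpr (hle _ N.2),
    sup_eq_right.mpr (hle _ N'.2)] using congrArg (Submodule.comap N₀.mkQ) h

theorem Ideal.finite_card_quotient_eq (R Λ : Type*) [CommRing R] [Ring Λ] [Algebra R Λ]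
    [Module.Finite R Λ] (n : ℕ) [Finite (R ⧸ Ideal.span {(n : R)})] :
    Finite {I : Ideal Λ // Nat.card (Λ ⧸ I) = n} :=
  have := Submodule.finite_card_quotient_eq R Λ n
  Finite.of_injective (β := {N : Submodule R Λ // Nat.card (Λ ⧸ N) = n})
    (fun I => ⟨I.1.restrictScalars R, I.2⟩)
    fun _ _ h => Subtype.ext (Submodule.restrictScalars_injective R Λ Λ (congrArg Subtype.val h))

instance PadicInt.finite_quotient_span_pow (p : ℕ) [Fact p.Prime] (m : ℕ) :
    Finite (ℤ_[p] ⧸ Ideal.span {((p ^ m : ℕ) : ℤ_[p])}) := by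
  rw [Nat.cast_pow, ← PadicInt.ker_toZModPow]
  exact Finite.of_equiv _ (RingHom.quotientKerEquivOfSurjective
    (ZMod.ringHom_surjective (PadicInt.toZModPow m))).toEquiv.symm

namespace Algebra.TensorProduct

variable (R : Type*) [CommRing R]

noncomputable def piLeft {ι : Type*} [Fintype ι] [DecidableEq ι] (A : ι → Type*)
    [∀ i, Ring (A i)] [∀ i, Algebra R (A i)] (B : Type*) [Ring B] [Algebra R B] :
    (∀ i, A i) ⊗[R] B ≃ₐ[R] ∀ i, A i ⊗[R] B :=
  (Algebra.TensorProduct.comm R _ B).trans <|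
    (piRight R R B A).trans <| AlgEquiv.piCongrRight fun i => Algebra.TensorProduct.comm R B (A i)

variable (R' : Type*) [CommRing R'] [Algebra R R']

/- Mathlib's `Algebra.TensorProduct.cancelBaseChange` is only stated for commutative `A`, `B`. -/
noncomputable def cancelBaseChangeOfRing (A B : Type*) [Ring A] [Algebra R A] [Algebra R' A]
    [IsScalarTower R R' A] [Ring B] [Algebra R B] :
    A ⊗[R'] (R' ⊗[R] B) ≃ₐ[R'] A ⊗[R] B :=
  (Algebra.TensorProduct.assoc R R' R' A R' B).symm.trans
    (congr (Algebra.TensorProduct.rid R' R' A) AlgEquiv.refl)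

variable {R R'} {A B : Type*} [Ring A] [Ring B] [Algebra R A] [Algebra R B]
  {g : ℕ} {S : Fin g → Type*} [∀ k, Ring (S k)] [∀ k, Algebra R (S k)] [∀ k, Algebra R' (S k)]
  [∀ k, IsScalarTower R R' (S k)]

noncomputable def tensorEquivPiOfBaseChangeEquiv (e : R' ⊗[R] B ≃ₐ[R'] ∀ k, S k) :
    R' ⊗[R] (A ⊗[R] B) ≃ₐ[R] ∀ k, S k ⊗[R'] (R' ⊗[R] A) :=
  (congr AlgEquiv.refl (Algebra.TensorProduct.comm R A B)).trans <|
    (Algebra.TensorProduct.assoc R R R R' B A).symm.trans <|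
      (congr (e.restrictScalars R) AlgEquiv.refl).trans <|
        (piLeft R S A).trans <|
          AlgEquiv.piCongrRight fun k =>
            ((cancelBaseChangeOfRing R R' (S k) A).restrictScalars R).symm

end Algebra.TensorProduct

theorem stmt15_general (p : ℕ) [Fact p.Prime]
    (Λ₁ Λ₂ : Type*) [Ring Λ₁] [Ring Λ₂]
    [Module.Finite ℤ Λ₁]
    (g : ℕ) (S : Fin g → Type*) [∀ k, Ring (S k)] [∀ k, Algebra ℤ_[p] (S k)]
    [∀ k, Module.Finite ℤ_[p] (S k)]
    (iso : (ℤ_[p] ⊗[ℤ] Λ₂) ≃ₐ[ℤ_[p]] ((k : Fin g) → S k)) :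
    ∀ m : ℕ,
      @leftIdealCount (ℤ_[p] ⊗[ℤ] (Λ₁ ⊗[ℤ] Λ₂)) Algebra.TensorProduct.instRing (p ^ m) =
        ∑ μ ∈ Finset.Nat.antidiagonalTuple g m,
          ∏ k : Fin g,
            leftIdealCount ((S k) ⊗[ℤ_[p]] (ℤ_[p] ⊗[ℤ] Λ₁)) (p ^ μ k) := by
  intro m
  have (k : Fin g) (n : ℕ) :=
    Ideal.finite_card_quotient_eq ℤ_[p] (S k ⊗[ℤ_[p]] (ℤ_[p] ⊗[ℤ] Λ₁)) (p ^ n)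
  exact (leftIdealCount_congr
    (Algebra.TensorProduct.tensorEquivPiOfBaseChangeEquiv iso).toRingEquiv (p ^ m)).trans
      (leftIdealCount_pi_prime_pow Fact.out _ m)

/-- Let `p` be a prime, `Λ₁`, `Λ₂` rings whose additive
groups are free `ℤ`-modules of finite rank, and suppose
`ℤ_[p] ⊗[ℤ] Λ₂ ≅ S₁ × ⋯ × S_g` as `ℤ_[p]`-algebras, where each `S k` is free of
finite rank over `ℤ_[p]`.  Then for every `m : ℕ`, the number of left ideals of
`ℤ_[p] ⊗[ℤ] (Λ₁ ⊗[ℤ] Λ₂)` of index `p^m` equals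
`∑_{m₁+⋯+m_g = m} ∏_k a_{p^{m_k}}(S_k ⊗[ℤ_[p]] (ℤ_[p] ⊗[ℤ] Λ₁))`. -/
theorem stmt15 (p : ℕ) [Fact p.Prime]
    (Λ₁ Λ₂ : Type*) [Ring Λ₁] [Ring Λ₂]
    [Module.Free ℤ Λ₁] [Module.Finite ℤ Λ₁]
    [Module.Free ℤ Λ₂] [Module.Finite ℤ Λ₂]
    (g : ℕ) (S : Fin g → Type*) [∀ k, Ring (S k)] [∀ k, Algebra ℤ_[p] (S k)]
    [∀ k, Module.Free ℤ_[p] (S k)] [∀ k, Module.Finite ℤ_[p] (S k)]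
    (iso : (ℤ_[p] ⊗[ℤ] Λ₂) ≃ₐ[ℤ_[p]] ((k : Fin g) → S k)) :
    ∀ m : ℕ,
      @leftIdealCount (ℤ_[p] ⊗[ℤ] (Λ₁ ⊗[ℤ] Λ₂)) Algebra.TensorProduct.instRing (p ^ m) =
        ∑ μ ∈ Finset.Nat.antidiagonalTuple g m,
          ∏ k : Fin g,
            leftIdealCount ((S k) ⊗[ℤ_[p]] (ℤ_[p] ⊗[ℤ] Λ₁)) (p ^ μ k) :=
  stmt15_general p Λ₁ Λ₂ g S iso
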